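/- arXiv:2201.01101 — 7 statements merged into one kernel-verified Lean document; each statement's English description precedes it below -/
import Mathlib

section
/- Let G be a finite simple graph on vertex set {1,...,n} with adjacency matrix A, and let {C₁,...,C_k} be an equitable partition of its vertex set with divisor matrix B. If λ is a main eigenvalue of G, then λ is a main eigenvalue of the divisor; that is, there exists η ∈ ℝ^k with Bᵀ η = λ η and e_kᵀ η ≠ 0. -/
open Matrix Finset

/-- The characteristic matrix of the partition of `Fin n` given by the fibers of
`f : Fin n → Fin k`: its `(v, j)` entry is `1` if `f v = j` and `0` otherwise. -/
def charMatrixOfPartition {n k : ℕ} (f : Fin n → Fin k) : Matrix (Fin n) (Fin k) ℝ :=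
  Matrix.of fun v j => if f v = j then (1 : ℝ) else 0

/-- If `{C₁,…,C_k}` is an equitable partition (all parts nonempty, i.e. `f`
surjective) of a finite simple graph `G` with divisor matrix `B`, and `λ` is a main
eigenvalue of `G`, then `λ` is a main eigenvalue of the divisor: there is `η ∈ ℝ^k` with
`Bᵀ η = λ η` and `e_kᵀ η ≠ 0`. -/
theorem main_of_graph_to_divisor {n k : ℕ} (G : SimpleGraph (Fin n)) [DecidableRel G.Adj]
    (f : Fin n → Fin k) (hf : Function.Surjective f)
    (B : Matrix (Fin k) (Fin k) ℝ)
    (hEq : G.adjMatrix ℝ * charMatrixOfPartition f = charMatrixOfPartition f * B)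
    (lam : ℝ)
    (hmain : ∃ x : Fin n → ℝ, (G.adjMatrix ℝ).mulVec x = lam • x ∧ ∑ v, x v ≠ 0) :
    ∃ η : Fin k → ℝ, Bᵀ.mulVec η = lam • η ∧ ∑ i, η i ≠ 0 := by
  obtain ⟨x, hx, hsum⟩ := hmain
  set C := charMatrixOfPartition f with hC
  refine ⟨Cᵀ.mulVec x, ?_, ?_⟩
  · calc Bᵀ.mulVec (Cᵀ.mulVec x) = (C * B)ᵀ.mulVec x := by
          rw [Matrix.transpose_mul, Matrix.mulVec_mulVec]
    _ = (G.adjMatrix ℝ * C)ᵀ.mulVec x := by rw [hEq]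
    _ = Cᵀ.mulVec ((G.adjMatrix ℝ).mulVec x) := by
          rw [Matrix.transpose_mul, SimpleGraph.transpose_adjMatrix, ← Matrix.mulVec_mulVec]
    _ = lam • Cᵀ.mulVec x := by rw [hx, Matrix.mulVec_smul]
  · have h2 : ∑ i, Cᵀ.mulVec x i = ∑ v, x v := by
      simp only [Matrix.mulVec, dotProduct, Matrix.transpose_apply]
      rw [Finset.sum_comm]
      refine Finset.sum_congr rfl fun v _ => ?_
      simp [hC, charMatrixOfPartition]
    rw [h2]; exact hsum
end

section
/- Let G be a finite simple graph on vertex set {1,...,n} with adjacency matrix A, and let {C₁,...,C_k} be an equitable partition of its vertex set with divisor matrix B. If λ is a main eigenvalue of the divisor, i.e., there exists η ∈ ℝ^k with Bᵀ η = λ η and e_kᵀ η ≠ 0, then λ is a main eigenvalue of G. -/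
open Matrix Finset

/-- If `{C₁,…,C_k}` is an equitable partition (all parts nonempty, i.e. `f`
surjective) of a finite simple graph `G` with divisor matrix `B`, and `λ` is a main
eigenvalue of the divisor (there is `η ∈ ℝ^k` with `Bᵀ η = λ η` and `e_kᵀ η ≠ 0`), then
`λ` is a main eigenvalue of `G`. -/
theorem main_of_divisor_to_graph {n k : ℕ} (G : SimpleGraph (Fin n)) [DecidableRel G.Adj]
    (f : Fin n → Fin k) (hf : Function.Surjective f)
    (B : Matrix (Fin k) (Fin k) ℝ)
    (hEq : G.adjMatrix ℝ * charMatrixOfPartition f = charMatrixOfPartition f * B)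
    (lam : ℝ)
    (hmain : ∃ η : Fin k → ℝ, Bᵀ.mulVec η = lam • η ∧ ∑ i, η i ≠ 0) :
    ∃ x : Fin n → ℝ, (G.adjMatrix ℝ).mulVec x = lam • x ∧ ∑ v, x v ≠ 0 := by
  classical
  obtain ⟨η, hη, hsum⟩ := hmain
  set C := charMatrixOfPartition f with hC
  set A := G.adjMatrix ℝ with hA
  set N : Fin k → ℝ := fun j => ((univ.filter (fun v => f v = j)).card : ℝ) with hNdef
  have hN : ∀ j, N j ≠ 0 := by
    intro j
    obtain ⟨v, hv⟩ := hf j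
    have hmem : v ∈ univ.filter (fun v => f v = j) := by simp [hv]
    have : 0 < (univ.filter (fun v => f v = j)).card := Finset.card_pos.mpr ⟨v, hmem⟩
    have : (0:ℝ) < N j := by
      show (0:ℝ) < ((univ.filter (fun v => f v = j)).card : ℝ)
      exact_mod_cast this
    exact this.ne'
  -- Cᵀ * C = diagonal N
  have hCtC : Cᵀ * C = Matrix.diagonal N := by
    ext i j
    simp only [Matrix.mul_apply, Matrix.transpose_apply, hC, charMatrixOfPartition,
      Matrix.of_apply, Matrix.diagonal_apply]
    have hterm : ∀ v, (if f v = i then (1:ℝ) else 0) * (if f v = j then 1 else 0)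
        = if f v = j then (if i = j then (1:ℝ) else 0) else 0 := by
      intro v
      rcases eq_or_ne (f v) j with h2 | h2
      · subst h2; simp [eq_comm]
      · simp [h2]
    rw [Finset.sum_congr rfl fun v _ => hterm v, ← Finset.sum_filter, Finset.sum_const]
    by_cases h : i = j <;> simp [h, hNdef, mul_comm]
  -- D * B is symmetric
  have hsym : Matrix.diagonal N * B = Bᵀ * Matrix.diagonal N := by
    have h1 : Cᵀ * A * C = Matrix.diagonal N * B := by
      rw [Matrix.mul_assoc, hEq, ← Matrix.mul_assoc, hCtC]
    have h2 : (Cᵀ * A * C)ᵀ = Cᵀ * A * C := by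
      rw [Matrix.transpose_mul, Matrix.transpose_mul, Matrix.transpose_transpose,
        SimpleGraph.transpose_adjMatrix, Matrix.mul_assoc]
    have h3 : (Matrix.diagonal N * B)ᵀ = Matrix.diagonal N * B := by rw [← h1, h2, h1]
    rw [Matrix.transpose_mul, Matrix.diagonal_transpose] at h3
    exact h3.symm
  set ζ : Fin k → ℝ := fun j => η j / N j with hζdef
  have hDζ : (Matrix.diagonal N).mulVec ζ = η := by
    funext j
    simp [Matrix.mulVec_diagonal, hζdef, hN j, mul_div_cancel₀]
  have hBζ : B.mulVec ζ = lam • ζ := by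
    have h1 : (Matrix.diagonal N).mulVec (B.mulVec ζ)
        = (Matrix.diagonal N).mulVec (lam • ζ) := by
      rw [Matrix.mulVec_mulVec, hsym, ← Matrix.mulVec_mulVec, hDζ, hη, Matrix.mulVec_smul, hDζ]
    funext j
    have := congrFun h1 j
    simp only [Matrix.mulVec_diagonal] at this
    exact mul_left_cancel₀ (hN j) this
  refine ⟨C.mulVec ζ, ?_, ?_⟩
  · rw [Matrix.mulVec_mulVec, hEq, ← Matrix.mulVec_mulVec, hBζ, Matrix.mulVec_smul]
  · have hxv : ∀ v, C.mulVec ζ v = ζ (f v) := by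
      intro v
      simp [Matrix.mulVec, dotProduct, hC, charMatrixOfPartition, ite_mul]
    have : ∑ v, C.mulVec ζ v = ∑ i, η i := by
      simp only [hxv]
      rw [← Finset.sum_fiberwise' univ f ζ]
      refine Finset.sum_congr rfl fun j _ => ?_
      rw [Finset.sum_const, nsmul_eq_mul]
      simp only [hζdef]
      rw [mul_div_cancel₀ _ (hN j)]
    rw [this]; exact hsum
end

section
/- Let G be a finite simple graph on vertex set {1,...,n} with adjacency matrix A, and let {C₁,...,C_k} be an equitable partition of its vertex set with divisor matrix B. Then G and its divisor have the same main spectrum: a real number λ is a main eigenvalue of G if and only if λ is a main eigenvalue of the divisor. -/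
open Matrix Finset

/-- If `{C₁,…,C_k}` is an equitable partition (all parts nonempty, i.e. `f`
surjective) of a finite simple graph `G` with divisor matrix `B`, then `G` and its divisor
have the same main spectrum: `λ` is a main eigenvalue of `G` iff `λ` is a main eigenvalue
of the divisor. -/
theorem same_main_spectrum {n k : ℕ} (G : SimpleGraph (Fin n)) [DecidableRel G.Adj]
    (f : Fin n → Fin k) (hf : Function.Surjective f)
    (B : Matrix (Fin k) (Fin k) ℝ)
    (hEq : G.adjMatrix ℝ * charMatrixOfPartition f = charMatrixOfPartition f * B)
    (lam : ℝ) :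
    (∃ x : Fin n → ℝ, (G.adjMatrix ℝ).mulVec x = lam • x ∧ ∑ v, x v ≠ 0) ↔
      (∃ η : Fin k → ℝ, Bᵀ.mulVec η = lam • η ∧ ∑ i, η i ≠ 0) := by
  classical
  set A := G.adjMatrix ℝ with hA
  set C := charMatrixOfPartition f with hCdef
  have hAsymm : Aᵀ = A := by
    simp [hA]
  -- sizes of the fibers
  set d : Fin k → ℝ := fun j => ((univ.filter fun v => f v = j).card : ℝ) with hd
  have hdpos : ∀ j, 0 < d j := by
    intro j
    have : (univ.filter fun v => f v = j).Nonempty := by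
      obtain ⟨v, hv⟩ := hf j
      exact ⟨v, by simp [hv]⟩
    simpa [hd] using Finset.card_pos.mpr this
  have hdne : ∀ j, d j ≠ 0 := fun j => (hdpos j).ne'
  -- mulVec of C
  have hCmul : ∀ g : Fin k → ℝ, C.mulVec g = fun v => g (f v) := by
    intro g; funext v
    simp [hCdef, charMatrixOfPartition, mulVec, dotProduct, ite_mul]
  -- mulVec of Cᵀ
  have hCTmul : ∀ x : Fin n → ℝ,
      Cᵀ.mulVec x = fun j => ∑ v ∈ univ.filter fun v => f v = j, x v := by
    intro x; funext j
    simp only [mulVec, dotProduct, transpose_apply, hCdef, charMatrixOfPartition,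
      Matrix.of_apply, ite_mul, one_mul, zero_mul]
    rw [Finset.sum_filter]
  -- Cᵀ * C = diagonal d
  have hCTC : Cᵀ * C = diagonal d := by
    ext i j
    by_cases h : i = j
    · subst h
      simp only [Matrix.mul_apply, transpose_apply, hCdef, charMatrixOfPartition,
        Matrix.of_apply, diagonal_apply_eq, hd]
      rw [Finset.card_filter]
      push_cast
      congr 1
      funext v
      by_cases hv : f v = i <;> simp [hv]
    · simp only [Matrix.mul_apply, transpose_apply, hCdef, charMatrixOfPartition,
        Matrix.of_apply, diagonal_apply_ne _ h]
      apply Finset.sum_eq_zero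
      intro v _
      by_cases hv : f v = i
      · simp [hv, h]
      · simp [hv]
    -- key symmetry relation
  have hDB : ∀ i j, d i * B i j = B j i * d j := by
    have h1 : Cᵀ * A * C = diagonal d * B := by
      rw [Matrix.mul_assoc, hEq, ← Matrix.mul_assoc, hCTC]
    have h2 : (Cᵀ * A * C)ᵀ = Cᵀ * A * C := by
      rw [Matrix.transpose_mul, Matrix.transpose_mul, transpose_transpose, hAsymm,
        Matrix.mul_assoc]
    have h3 : (diagonal d * B)ᵀ = diagonal d * B := by rw [← h1]; exact h2
    intro i j
    have h4 := congrFun (congrFun h3 i) j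
    simp only [transpose_apply, Matrix.mul_apply, diagonal, Matrix.of_apply, ite_mul,
      zero_mul, Finset.sum_ite_eq, Finset.mem_univ, if_true] at h4
    rw [← h4]; ring
  constructor
  · rintro ⟨x, hx, hs⟩
    refine ⟨Cᵀ.mulVec x, ?_, ?_⟩
    · have hBC : Bᵀ * Cᵀ = Cᵀ * A := by
        have := congrArg Matrix.transpose hEq
        rw [Matrix.transpose_mul, Matrix.transpose_mul, hAsymm] at this
        exact this.symm
      calc Bᵀ.mulVec (Cᵀ.mulVec x) = (Bᵀ * Cᵀ).mulVec x := by
            rw [Matrix.mulVec_mulVec]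
        _ = (Cᵀ * A).mulVec x := by rw [hBC]
        _ = Cᵀ.mulVec (A.mulVec x) := by rw [Matrix.mulVec_mulVec]
        _ = Cᵀ.mulVec (lam • x) := by rw [hx]
        _ = lam • Cᵀ.mulVec x := by rw [Matrix.mulVec_smul]
    · rw [hCTmul]
      simpa using (Finset.sum_fiberwise univ f x).symm ▸ hs
  · rintro ⟨η, hη, hs⟩
    set ξ : Fin k → ℝ := fun j => η j / d j with hξ
    have hBξ : B.mulVec ξ = lam • ξ := by
      funext i
      have hηi : ∑ j, B j i * η j = lam * η i := by
        have := congrFun hη i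
        simpa [mulVec, dotProduct, transpose_apply] using this
      have : ∀ j, B i j * ξ j = (B j i * η j) / d i := by
        intro j
        have h := hDB i j
        rw [hξ]
        field_simp [hdne i, hdne j]
        linear_combination η j * h
      simp only [mulVec, dotProduct, Pi.smul_apply, smul_eq_mul]
      rw [Finset.sum_congr rfl (fun j _ => this j), ← Finset.sum_div, hηi, hξ]
      ring
    refine ⟨C.mulVec ξ, ?_, ?_⟩
    · calc A.mulVec (C.mulVec ξ) = (A * C).mulVec ξ := by rw [Matrix.mulVec_mulVec]
        _ = (C * B).mulVec ξ := by rw [hEq]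
        _ = C.mulVec (B.mulVec ξ) := by rw [Matrix.mulVec_mulVec]
        _ = C.mulVec (lam • ξ) := by rw [hBξ]
        _ = lam • C.mulVec ξ := by rw [Matrix.mulVec_smul]
    · rw [hCmul]
      have : ∑ v, ξ (f v) = ∑ j, η j := by
        rw [← Finset.sum_fiberwise' univ f ξ]
        refine Finset.sum_congr rfl fun j _ => ?_
        rw [Finset.sum_const, nsmul_eq_mul]
        show d j * (η j / d j) = η j
        rw [mul_div_assoc', mul_div_cancel_left₀ _ (hdne j)]
      rw [this]
      exact hs
end

section
/- For an even integer k ≥ 6, the vector ξ ∈ ℝ^k defined by ξ₁ = 1, ξ₂ = −2, ξ₃ = −1, ξ₄ = 2(k−3), and ξ_{4+j} = (−1)^j · 4(k−3−j) for j = 1,...,k−4 satisfies Bᵀ ξ = −2 ξ, where B is the k×k tridiagonal matrix described below; in particular, −2 is an eigenvalue of Bᵀ (and of B). -/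
open Matrix Finset

/-- The `k × k` tridiagonal matrix with zero diagonal, all subdiagonal entries `1`,
and superdiagonal entries `5, k-4, 4, 2, 1, 1, …, 1` (0-indexed: row `i` has
superdiagonal entry `B i (i+1)`). -/
noncomputable def divisorMatrix (k : ℕ) : Matrix (Fin k) (Fin k) ℝ :=
  Matrix.of fun i j =>
    if (j : ℕ) = (i : ℕ) + 1 then
      (if (i : ℕ) = 0 then 5
       else if (i : ℕ) = 1 then (k : ℝ) - 4
       else if (i : ℕ) = 2 then 4
       else if (i : ℕ) = 3 then 2
       else 1)
    else if (i : ℕ) = (j : ℕ) + 1 then 1 else 0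

/-- The vector `ξ ∈ ℝ^k` with (1-indexed) entries `ξ₁ = 1`, `ξ₂ = -2`, `ξ₃ = -1`,
`ξ₄ = 2(k-3)` and `ξ_{4+j} = (-1)^j · 4(k-3-j)` for `j = 1, …, k-4`.
(0-indexed: entry `i ≥ 4` equals `(-1)^{i+1} · 4 · (k - i)`.) -/
noncomputable def xiVec (k : ℕ) : Fin k → ℝ := fun i =>
  if (i : ℕ) = 0 then 1
  else if (i : ℕ) = 1 then -2
  else if (i : ℕ) = 2 then -1
  else if (i : ℕ) = 3 then 2 * ((k : ℝ) - 3)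
  else (-1 : ℝ) ^ ((i : ℕ) + 1) * (4 * ((k : ℝ) - (i : ℕ)))


noncomputable def Bnat (k i j : ℕ) : ℝ :=
  if j = i + 1 then
    (if i = 0 then 5
     else if i = 1 then (k : ℝ) - 4
     else if i = 2 then 4
     else if i = 3 then 2
     else 1)
  else if i = j + 1 then 1 else 0

noncomputable def xin (k i : ℕ) : ℝ :=
  if i = 0 then 1
  else if i = 1 then -2
  else if i = 2 then -1
  else if i = 3 then 2 * ((k : ℝ) - 3)
  else (-1 : ℝ) ^ (i + 1) * (4 * ((k : ℝ) - i))

lemma keysum (k : ℕ) (hk : Even k) (hk6 : 6 ≤ k) (j : ℕ) (hj : j < k) :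
    ∑ i ∈ Finset.range k, Bnat k i j * xin k i = -2 * xin k j := by
  by_cases hlast : j = k - 1
  · subst hlast
    rw [Finset.sum_eq_single (k - 2)]
    · have hb : Bnat k (k - 2) (k - 1) = 1 := by
        unfold Bnat; split_ifs <;> first | rfl | (exfalso; omega) | exact absurd trivial (by assumption) | exact (by assumption : False).elim
      have hx1 : xin k (k - 2) = (-1 : ℝ) ^ (k - 2 + 1) * (4 * ((k : ℝ) - (k - 2 : ℕ))) := by
        unfold xin; split_ifs <;> first | rfl | (exfalso; omega) | exact absurd trivial (by assumption) | exact (by assumption : False).elim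
      have hx2 : xin k (k - 1) = (-1 : ℝ) ^ (k - 1 + 1) * (4 * ((k : ℝ) - (k - 1 : ℕ))) := by
        unfold xin; split_ifs <;> first | rfl | (exfalso; omega) | exact absurd trivial (by assumption) | exact (by assumption : False).elim
      have hodd : Odd (k - 2 + 1) := by
        have : k - 2 + 1 = k - 1 := by omega
        rw [this]; exact Nat.Even.sub_odd (by omega) hk odd_one
      have heven : Even (k - 1 + 1) := by
        have : k - 1 + 1 = k := by omega
        rw [this]; exact hk
      have hc1 : ((k - 2 : ℕ) : ℝ) = (k : ℝ) - 2 := by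
        have : (2:ℕ) ≤ k := by omega
        push_cast [this]; ring
      have hc2 : ((k - 1 : ℕ) : ℝ) = (k : ℝ) - 1 := by
        have : (1:ℕ) ≤ k := by omega
        push_cast [this]; ring
      rw [hb, hx1, hx2, hodd.neg_one_pow, heven.neg_one_pow, hc1, hc2]
      ring
    · intro b hb hne
      have hb' := Finset.mem_range.mp hb
      have hz : Bnat k b (k - 1) = 0 := by
        unfold Bnat; split_ifs <;> first | rfl | (exfalso; omega) | exact absurd trivial (by assumption) | exact (by assumption : False).elim
      rw [hz, zero_mul]
    · intro h
      exact absurd (Finset.mem_range.mpr (by omega)) h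
  · have hj1 : j + 1 < k := by omega
    have hsub : ({j - 1, j + 1} : Finset ℕ) ⊆ Finset.range k := by
      intro x hx
      simp only [Finset.mem_insert, Finset.mem_singleton] at hx
      rcases hx with rfl | rfl <;> exact Finset.mem_range.mpr (by omega)
    have hz : ∀ x ∈ Finset.range k, x ∉ ({j - 1, j + 1} : Finset ℕ) →
        Bnat k x j * xin k x = 0 := by
      intro x hx hnx
      simp only [Finset.mem_insert, Finset.mem_singleton, not_or] at hnx
      have hb : Bnat k x j = 0 := by
        unfold Bnat; split_ifs <;> first | rfl | (exfalso; omega) | exact absurd trivial (by assumption) | exact (by assumption : False).elim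
      rw [hb, zero_mul]
    rw [← Finset.sum_subset hsub hz, Finset.sum_pair (by omega : j - 1 ≠ j + 1)]
    rcases j with _ | _ | _ | _ | _ | m
    · norm_num [Bnat, xin]
    · norm_num [Bnat, xin]
    · norm_num [Bnat, xin]; ring
    · norm_num [Bnat, xin]; ring
    · norm_num [Bnat, xin]; ring
    · show Bnat k (m + 4) (m + 5) * xin k (m + 4) +
        Bnat k (m + 6) (m + 5) * xin k (m + 6) = -2 * xin k (m + 5)
      have e1 : Bnat k (m + 4) (m + 5) = 1 := by
        unfold Bnat; split_ifs <;> first | rfl | (exfalso; omega) | exact absurd trivial (by assumption) | exact (by assumption : False).elim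
      have e2 : Bnat k (m + 6) (m + 5) = 1 := by
        unfold Bnat; split_ifs <;> first | rfl | (exfalso; omega) | exact absurd trivial (by assumption) | exact (by assumption : False).elim
      have e3 : xin k (m + 4) = (-1 : ℝ) ^ (m + 4 + 1) * (4 * ((k : ℝ) - (m + 4 : ℕ))) := by
        unfold xin; split_ifs <;> first | rfl | (exfalso; omega) | exact absurd trivial (by assumption) | exact (by assumption : False).elim
      have e4 : xin k (m + 6) = (-1 : ℝ) ^ (m + 6 + 1) * (4 * ((k : ℝ) - (m + 6 : ℕ))) := by
        unfold xin; split_ifs <;> first | rfl | (exfalso; omega) | exact absurd trivial (by assumption) | exact (by assumption : False).elim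
      have e5 : xin k (m + 5) = (-1 : ℝ) ^ (m + 5 + 1) * (4 * ((k : ℝ) - (m + 5 : ℕ))) := by
        unfold xin; split_ifs <;> first | rfl | (exfalso; omega) | exact absurd trivial (by assumption) | exact (by assumption : False).elim
      rw [e1, e2, e3, e4, e5]
      push_cast
      ring

/-- For even `k ≥ 6`, the vector `ξ` satisfies `Bᵀ ξ = -2 ξ`; in particular
`-2` is an eigenvalue of `Bᵀ` and of `B`. -/
theorem xi_is_eigenvector (k : ℕ) (hk : Even k) (hk6 : 6 ≤ k) :
    (divisorMatrix k)ᵀ.mulVec (xiVec k) = (-2 : ℝ) • xiVec k ∧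
      (∃ η : Fin k → ℝ, η ≠ 0 ∧ (divisorMatrix k)ᵀ.mulVec η = (-2 : ℝ) • η) ∧
      (∃ ζ : Fin k → ℝ, ζ ≠ 0 ∧ (divisorMatrix k).mulVec ζ = (-2 : ℝ) • ζ) := by
  have hmem : ∀ j : Fin k, (divisorMatrix k)ᵀ.mulVec (xiVec k) j = -2 * xiVec k j := by
    intro j
    have hstep : (divisorMatrix k)ᵀ.mulVec (xiVec k) j
        = ∑ i ∈ Finset.range k, Bnat k i (j : ℕ) * xin k i :=
      Fin.sum_univ_eq_sum_range (fun i => Bnat k i (j : ℕ) * xin k i) k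
    rw [hstep, keysum k hk hk6 j j.isLt]
    rfl
  have h1 : (divisorMatrix k)ᵀ.mulVec (xiVec k) = (-2 : ℝ) • xiVec k := by
    funext j
    rw [hmem j]
    simp [Pi.smul_apply, smul_eq_mul]
  have hne : xiVec k ≠ 0 := by
    intro h
    have h0 : xiVec k ⟨0, by omega⟩ = 0 := by rw [h]; rfl
    have : xiVec k ⟨0, by omega⟩ = 1 := rfl
    rw [this] at h0
    norm_num at h0
  refine ⟨h1, ⟨xiVec k, hne, h1⟩, ?_⟩
  -- transfer eigenvalue to B via determinants
  set M : Matrix (Fin k) (Fin k) ℝ := divisorMatrix k + (2 : ℝ) • 1 with hM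
  have hMt : Mᵀ.mulVec (xiVec k) = 0 := by
    rw [hM, Matrix.transpose_add, Matrix.transpose_smul, Matrix.transpose_one,
      Matrix.add_mulVec, Matrix.smul_mulVec, Matrix.one_mulVec, h1]
    funext j
    simp
  have hdet : Mᵀ.det = 0 := by
    rw [← Matrix.exists_mulVec_eq_zero_iff]
    exact ⟨xiVec k, hne, hMt⟩
  have hdetM : M.det = 0 := by rwa [Matrix.det_transpose] at hdet
  obtain ⟨ζ, hζne, hζ⟩ := (Matrix.exists_mulVec_eq_zero_iff).mpr hdetM
  refine ⟨ζ, hζne, ?_⟩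
  rw [hM, Matrix.add_mulVec, Matrix.smul_mulVec, Matrix.one_mulVec] at hζ
  have : divisorMatrix k *ᵥ ζ = -((2:ℝ) • ζ) := by
    rw [eq_neg_iff_add_eq_zero]; exact hζ
  rw [this]
  funext j
  simp
end

section
/- For an even integer k ≥ 6, let B be the k×k tridiagonal matrix described below. Then the set of main eigenvalues of B, i.e., the set of real numbers λ for which there exists η ∈ ℝ^k with Bᵀ η = λ η and e_kᵀ η ≠ 0, has at most k−1 elements. -/
/-!
The vector `w = (1, -2, -1, 2(k-3), 4(-1)^(j+1)(k-j) for 4 ≤ j < k)` is an eigenvector of `Bᵀ`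
for the eigenvalue `-2`, and its entries sum to `0` when `k` is even. Since `Bᵀ` is lower
Hessenberg with nonzero superdiagonal, an eigenvector is determined by its first entry, so every
eigenvector for `-2` is a multiple of `w` and `-2` is an eigenvalue that is not main. A `k × k`
matrix has at most `k` eigenvalues, hence at most `k - 1` main ones.
-/

open Matrix Finset

theorem Module.End.ncard_setOf_hasEigenvalue_le_finrank {K V : Type*} [Field K]
    [AddCommGroup V] [Module K V] [FiniteDimensional K V] (f : Module.End K V) :
    {μ | f.HasEigenvalue μ}.ncard ≤ Module.finrank K V := by
  classical
  calc {μ | f.HasEigenvalue μ}.ncard ≤ (↑f.charpoly.roots.toFinset : Set K).ncard := by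
        refine Set.ncard_le_ncard (fun μ hμ => ?_) (Finset.finite_toSet _)
        rw [Finset.mem_coe, Multiset.mem_toFinset, Polynomial.mem_roots f.charpoly_monic.ne_zero]
        exact (hasEigenvalue_iff_isRoot_charpoly f μ).mp hμ
    _ ≤ Multiset.card f.charpoly.roots := by
        rw [Set.ncard_coe_finset]; exact Multiset.toFinset_card_le _
    _ ≤ f.charpoly.natDegree := Polynomial.card_roots' _
    _ = Module.finrank K V := f.charpoly_natDegree

theorem Matrix.hasEigenvalue_toLin'_of_mulVec_eq_smul {R n : Type*} [CommRing R] [Fintype n]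
    [DecidableEq n] {A : Matrix n n R} {μ : R} {η : n → R} (hη : A *ᵥ η = μ • η) (hne : η ≠ 0) :
    Module.End.HasEigenvalue (toLin' A) μ :=
  Module.End.hasEigenvalue_of_hasEigenvector
    ⟨Module.End.mem_eigenspace_iff.mpr (by rwa [toLin'_apply]), hne⟩

structure Matrix.IsUnreducedLowerHessenberg {R : Type*} [Zero R] {k : ℕ}
    (M : Matrix (Fin k) (Fin k) R) : Prop where
  apply_eq_zero : ∀ i j : Fin k, (i : ℕ) + 1 < j → M i j = 0
  apply_ne_zero : ∀ i j : Fin k, (j : ℕ) = i + 1 → M i j ≠ 0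

namespace Matrix.IsUnreducedLowerHessenberg

variable {R : Type*} [CommRing R] [NoZeroDivisors R] {k : ℕ} {M : Matrix (Fin k) (Fin k) R}

-- Row `m` of `M *ᵥ η = μ • η` determines `η (m + 1)` from `η 0, …, η m`.
theorem eq_zero_of_mulVec_eq_smul (hM : M.IsUnreducedLowerHessenberg) (hk : 0 < k) {μ : R}
    {η : Fin k → R} (hη : M *ᵥ η = μ • η) (h0 : η ⟨0, hk⟩ = 0) : η = 0 := by
  suffices ∀ n (hn : n < k), η ⟨n, hn⟩ = 0 from funext fun i => this i i.isLt
  intro n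
  induction n using Nat.strong_induction_on with
  | _ n ih =>
  intro hn
  rcases n with _ | m
  · exact h0
  have hrow := congrFun hη ⟨m, by omega⟩
  rw [mulVec, dotProduct, Finset.sum_eq_single ⟨m + 1, hn⟩, Pi.smul_apply, ih m (by omega),
    smul_zero] at hrow
  · exact (mul_eq_zero.mp hrow).resolve_left (hM.apply_ne_zero _ _ rfl)
  · intro j _ hj
    rcases lt_or_gt_of_ne (Fin.val_ne_of_ne hj) with hlt | hgt
    · rw [ih j (by simpa using hlt), mul_zero]
    · rw [hM.apply_eq_zero _ _ hgt, zero_mul]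
  · exact fun h => absurd (Finset.mem_univ _) h

theorem eq_smul_of_mulVec_eq_smul (hM : M.IsUnreducedLowerHessenberg) (hk : 0 < k) {μ : R}
    {w η : Fin k → R} (hw : M *ᵥ w = μ • w) (hw0 : w ⟨0, hk⟩ = 1) (hη : M *ᵥ η = μ • η) :
    η = η ⟨0, hk⟩ • w := by
  rw [← sub_eq_zero]
  refine hM.eq_zero_of_mulVec_eq_smul hk (μ := μ) ?_ (by simp [hw0])
  rw [mulVec_sub, mulVec_smul, hη, hw, smul_sub, smul_comm]

end Matrix.IsUnreducedLowerHessenberg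

noncomputable def divisorSuperdiag (k : ℕ) : ℕ → ℝ
  | 0 => 5
  | 1 => k - 4
  | 2 => 4
  | 3 => 2
  | _ + 4 => 1

theorem divisorMatrix_apply {k : ℕ} (i j : Fin k) :
    divisorMatrix k i j =
      if (j : ℕ) = i + 1 then divisorSuperdiag k i else if (i : ℕ) = j + 1 then 1 else 0 := by
  obtain ⟨_ | _ | _ | _ | n, hi⟩ := i <;> simp [divisorMatrix, divisorSuperdiag]

theorem transpose_divisorMatrix_mulVec_apply {k : ℕ} (v : ℕ → ℝ) (i : Fin k) :
    ((divisorMatrix k)ᵀ *ᵥ fun j => v j) i = ∑ j ∈ range k,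
      (if (i : ℕ) = j + 1 then divisorSuperdiag k j else if j = i + 1 then 1 else 0) * v j := by
  simp only [mulVec, dotProduct, transpose_apply, divisorMatrix_apply]
  exact Fin.sum_univ_eq_sum_range (fun j =>
    (if (i : ℕ) = j + 1 then divisorSuperdiag k j else if j = i + 1 then 1 else 0) * v j) k

theorem transpose_divisorMatrix_mulVec_apply_zero {k : ℕ} (v : ℕ → ℝ) (hv : v k = 0)
    (hk : 0 < k) : ((divisorMatrix k)ᵀ *ᵥ fun j => v j) ⟨0, hk⟩ = v 1 := by
  rw [transpose_divisorMatrix_mulVec_apply, Finset.sum_eq_single 1]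
  · simp
  · intro j _ hj
    simp [hj]
  · intro h1
    obtain rfl : k = 1 := by simp only [mem_range, not_lt] at h1; omega
    simp [hv]

theorem transpose_divisorMatrix_mulVec_apply_succ {k : ℕ} (v : ℕ → ℝ) (hv : v k = 0)
    (m : ℕ) (hm : m + 1 < k) :
    ((divisorMatrix k)ᵀ *ᵥ fun j => v j) ⟨m + 1, hm⟩ = divisorSuperdiag k m * v m + v (m + 2) := by
  rw [transpose_divisorMatrix_mulVec_apply, Finset.sum_eq_add m (m + 2) (by omega)]
  · simp
  · intro j _ hj
    simp [hj, Ne.symm hj.1]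
  · intro h; simp only [mem_range, not_lt] at h; omega
  · intro h
    obtain rfl : k = m + 2 := by simp only [mem_range, not_lt] at h; omega
    simp [hv]

theorem isUnreducedLowerHessenberg_transpose_divisorMatrix (k : ℕ) :
    (divisorMatrix k)ᵀ.IsUnreducedLowerHessenberg where
  apply_eq_zero i j h := by
    rw [transpose_apply, divisorMatrix_apply, if_neg (by omega), if_neg (by omega)]
  apply_ne_zero i j h := by
    rw [transpose_apply, divisorMatrix_apply, if_neg (by omega), if_pos h]
    exact one_ne_zero

-- Indexed by `ℕ` with value `0` at `k`, so that the last row of `Bᵀ w = -2 • w` follows the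
-- generic pattern `w (m - 1) + w (m + 1) = -2 * w m`.
noncomputable def divisorEigenvector (k : ℕ) : ℕ → ℝ
  | 0 => 1
  | 1 => -2
  | 2 => -1
  | 3 => 2 * (k - 3)
  | n + 4 => 4 * (-1) ^ (n + 1) * (k - (n + 4 : ℕ))

theorem divisorEigenvector_self {k : ℕ} (hk : 4 ≤ k) : divisorEigenvector k k = 0 := by
  obtain ⟨n, rfl⟩ := Nat.exists_eq_add_of_le' hk
  simp [divisorEigenvector]

theorem transpose_divisorMatrix_mulVec_divisorEigenvector {k : ℕ} (hk : 4 ≤ k) :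
    (divisorMatrix k)ᵀ *ᵥ (fun j : Fin k => divisorEigenvector k j) =
      (-2 : ℝ) • fun j : Fin k => divisorEigenvector k j := by
  have hv := divisorEigenvector_self hk
  ext ⟨_ | m, hm⟩
  · rw [transpose_divisorMatrix_mulVec_apply_zero _ hv]
    simp [divisorEigenvector]
  · rw [transpose_divisorMatrix_mulVec_apply_succ _ hv]
    rcases m with _ | _ | _ | _ | n <;>
      simp only [divisorEigenvector, divisorSuperdiag, Pi.smul_apply, smul_eq_mul] <;> push_cast <;>
      ring

theorem sum_divisorEigenvector {k : ℕ} (hk : Even k) (hk4 : 4 ≤ k) :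
    ∑ j : Fin k, divisorEigenvector k j = 0 := by
  obtain ⟨n, rfl⟩ := Nat.exists_eq_add_of_le hk4
  have hn : Even n := (Nat.even_add.mp hk).mp (by decide)
  set G : ℕ → ℝ := fun x => (-1) ^ x * (2 * (n - x : ℝ) + 1)
  have htail : ∀ x, divisorEigenvector (4 + n) (4 + x) = G (x + 1) - G x := by
    intro x
    simp only [add_comm 4 x, divisorEigenvector, G]
    push_cast; ring
  rw [Fin.sum_univ_eq_sum_range (divisorEigenvector (4 + n)), Finset.sum_range_add,
    Finset.sum_congr rfl fun x _ => htail x, Finset.sum_range_sub]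
  simp only [sum_range_succ, sum_range_zero, divisorEigenvector, G, hn.neg_one_pow]
  push_cast
  ring

theorem sum_eq_zero_of_transpose_divisorMatrix_mulVec_eq_neg_two_smul {k : ℕ} (hk : Even k)
    (hk4 : 4 ≤ k) {η : Fin k → ℝ} (hη : (divisorMatrix k)ᵀ *ᵥ η = (-2 : ℝ) • η) :
    ∑ i, η i = 0 := by
  rw [(isUnreducedLowerHessenberg_transpose_divisorMatrix k).eq_smul_of_mulVec_eq_smul
    (by omega) (transpose_divisorMatrix_mulVec_divisorEigenvector hk4) rfl hη]
  simp [← Finset.mul_sum, sum_divisorEigenvector hk hk4]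

/-- For even `k ≥ 6`, the set of main eigenvalues of `B` — the real `λ`
admitting `η ∈ ℝ^k` with `Bᵀ η = λ η` and `e_kᵀ η ≠ 0` — has at most `k - 1` elements. -/
theorem divisor_main_eigenvalues_at_most (k : ℕ) (hk : Even k) (hk6 : 6 ≤ k) :
    {lam : ℝ | ∃ η : Fin k → ℝ,
        (divisorMatrix k)ᵀ.mulVec η = lam • η ∧ ∑ i, η i ≠ 0}.Finite ∧
      {lam : ℝ | ∃ η : Fin k → ℝ,
        (divisorMatrix k)ᵀ.mulVec η = lam • η ∧ ∑ i, η i ≠ 0}.ncard ≤ k - 1 := by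
  set E := {μ | Module.End.HasEigenvalue (toLin' (divisorMatrix k)ᵀ) μ}
  have hE : E.Finite := Module.End.finite_hasEigenvalue _
  have hneg2 : (-2 : ℝ) ∈ E :=
    hasEigenvalue_toLin'_of_mulVec_eq_smul (transpose_divisorMatrix_mulVec_divisorEigenvector
      (by omega)) fun h => by simpa [divisorEigenvector] using congrFun h ⟨0, by omega⟩
  have hsub : {lam : ℝ | ∃ η : Fin k → ℝ,
      (divisorMatrix k)ᵀ.mulVec η = lam • η ∧ ∑ i, η i ≠ 0} ⊆ E \ {-2} := by
    rintro μ ⟨η, hη, hsum⟩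
    refine ⟨hasEigenvalue_toLin'_of_mulVec_eq_smul hη fun h => hsum (by simp [h]), ?_⟩
    rintro rfl
    exact hsum (sum_eq_zero_of_transpose_divisorMatrix_mulVec_eq_neg_two_smul hk (by omega) hη)
  refine ⟨hE.sdiff.subset hsub, ?_⟩
  calc _ ≤ (E \ {-2}).ncard := Set.ncard_le_ncard hsub hE.sdiff
    _ = E.ncard - 1 := Set.ncard_sdiff_singleton_of_mem hneg2
    _ ≤ k - 1 := Nat.sub_le_sub_right ((Module.End.ncard_setOf_hasEigenvalue_le_finrank
      (toLin' (divisorMatrix k)ᵀ)).trans_eq (Module.finrank_fin_fun ℝ)) 1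
end

section
/- Let k ≥ 6 be an even integer and let T be the generalized Bethe tree B(5, k−3, 5, 3, 2, 2, ..., 2) with k levels (degree sequence d₁ = 5, d₂ = k−3, d₃ = 5, d₄ = 3, and d₅ = ⋯ = d_{k−1} = 2). Then T has at most k−1 main eigenvalues; that is, the set of main eigenvalues of T has cardinality at most k−1. -/
open Matrix Finset

/-- `G` is a generalized Bethe tree `B(d₁, …, d_{k-1})` with `k` levels and root `r`:
it is a tree, each `dᵢ ≥ 2`, every vertex at distance `i - 1` from `r` has degree `dᵢ`
(for `1 ≤ i ≤ k - 1`), every vertex at distance `k - 1` from `r` has degree `1`, and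
every vertex is at distance at most `k - 1` from `r`. -/
def IsGenBetheTree {V : Type*} (G : SimpleGraph V) (r : V) (k : ℕ) (d : ℕ → ℕ) : Prop :=
  G.IsTree ∧
  (∀ i, 1 ≤ i → i ≤ k - 1 → 2 ≤ d i) ∧
  (∀ i, 1 ≤ i → i ≤ k - 1 → ∀ v, G.dist r v = i - 1 → (G.neighborSet v).ncard = d i) ∧
  (∀ v : V, G.dist r v = k - 1 → (G.neighborSet v).ncard = 1) ∧
  (∀ v : V, G.dist r v ≤ k - 1)

open scoped Classical in
/-- The adjacency matrix of `G` over `ℝ`. -/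
noncomputable def adjMat {V : Type*} [Fintype V] (G : SimpleGraph V) : Matrix V V ℝ :=
  Matrix.of fun v w => if G.Adj v w then (1 : ℝ) else 0

/-- The set of main eigenvalues of `G`: those `λ` admitting a real eigenvector of the
adjacency matrix whose entry sum is nonzero. -/
noncomputable def mainSpectrum {V : Type*} [Fintype V] (G : SimpleGraph V) : Set ℝ :=
  {lam : ℝ | ∃ x : V → ℝ, (adjMat G).mulVec x = lam • x ∧ ∑ v, x v ≠ 0}

/-- The degree sequence `d₁ = 5`, `d₂ = k - 3`, `d₃ = 5`, `d₄ = 3`,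
`d₅ = ⋯ = d_{k-1} = 2`. -/
def counterexampleDegrees (k : ℕ) : ℕ → ℕ := fun i =>
  if i = 1 then 5 else if i = 2 then k - 3 else if i = 3 then 5 else if i = 4 then 3 else 2

namespace BetheAux

variable {V : Type*} {G : SimpleGraph V} {r : V}

/-- In a tree, adjacent vertices are at different distances from `r`. -/
lemma tree_adj_dist_ne (hG : G.IsTree) {u v : V} (h : G.Adj u v) :
    G.dist r u ≠ G.dist r v := by
  classical
  intro he
  obtain ⟨p, hp, hlen⟩ := hG.isConnected.exists_path_of_dist r u
  have hvp : v ∉ p.support := by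
    intro hv
    have h1 : (p.takeUntil v hv).length + (p.dropUntil v hv).length = p.length := by
      have := congr_arg SimpleGraph.Walk.length (p.take_spec hv)
      rwa [SimpleGraph.Walk.length_append] at this
    have h2 : G.dist r v ≤ (p.takeUntil v hv).length := SimpleGraph.dist_le _
    have h3 : 1 ≤ (p.dropUntil v hv).length := by
      have := SimpleGraph.dist_le (p.dropUntil v hv)
      have hne : v ≠ u := h.symm.ne
      have := hG.isConnected.pos_dist_of_ne hne
      omega
    omega
  have hq : ((SimpleGraph.Walk.cons h.symm p.reverse).reverse).IsPath := by
    exact ((hp.reverse.cons (by simpa using hvp))).reverse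
  obtain ⟨p', hp', hlen'⟩ := hG.isConnected.exists_path_of_dist r v
  have := (hG.existsUnique_path r v).unique hq hp'
  have hL := congr_arg SimpleGraph.Walk.length this
  simp [SimpleGraph.Walk.length_reverse, hlen, hlen'] at hL
  omega

/-- Each neighbor of `v` is one level up or one level down. -/
lemma neighbor_level (hG : G.IsTree) {u v : V} (h : G.Adj v u) :
    G.dist r u = G.dist r v + 1 ∨ G.dist r u + 1 = G.dist r v := by
  have h1 : G.dist r u ≤ G.dist r v + 1 := by
    have := hG.isConnected.dist_triangle (u := r) (v := v) (w := u)
    rw [SimpleGraph.dist_eq_one_iff_adj.mpr h] at this; omega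
  have h2 : G.dist r v ≤ G.dist r u + 1 := by
    have := hG.isConnected.dist_triangle (u := r) (v := u) (w := v)
    rw [SimpleGraph.dist_eq_one_iff_adj.mpr h.symm] at this; omega
  have h3 := tree_adj_dist_ne (r := r) hG h
  omega

lemma notMem_support_of_lt (hG : G.IsTree) {u v : V} (p : G.Walk r u)
    (hlen : p.length < G.dist r v) : v ∉ p.support := by
  classical
  intro hv
  have h2 : G.dist r v ≤ (p.takeUntil v hv).length := SimpleGraph.dist_le _
  have h3 := SimpleGraph.Walk.length_takeUntil_le p hv
  omega

/-- Every non-root vertex has a unique neighbor one level closer to the root. -/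
lemma existsUnique_parent (hG : G.IsTree) {v : V} (hv : G.dist r v ≠ 0) :
    ∃! u, G.Adj v u ∧ G.dist r u + 1 = G.dist r v := by
  classical
  obtain ⟨p, hp, hlen⟩ := hG.isConnected.exists_path_of_dist r v
  have hex : ∃ u, G.Adj v u ∧ G.dist r u + 1 = G.dist r v := by
    cases hq : p.reverse with
    | nil =>
      exfalso
      have : p.reverse.length = 0 := by rw [hq]; rfl
      rw [SimpleGraph.Walk.length_reverse] at this; omega
    | cons h q =>
      rename_i w
      refine ⟨w, h, ?_⟩
      have hd1 : G.dist r w ≤ q.reverse.length := SimpleGraph.dist_le _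
      rw [SimpleGraph.Walk.length_reverse] at hd1
      have hql : q.length + 1 = p.length := by
        have : p.reverse.length = q.length + 1 := by rw [hq]; simp
        rw [SimpleGraph.Walk.length_reverse] at this; omega
      have h2 : G.dist r v ≤ G.dist r w + 1 := by
        have := hG.isConnected.dist_triangle (u := r) (v := w) (w := v)
        rw [SimpleGraph.dist_eq_one_iff_adj.mpr h.symm] at this; omega
      omega
  obtain ⟨u, hu⟩ := hex
  refine ⟨u, hu, ?_⟩
  rintro u' ⟨ha', hd'⟩
  obtain ⟨ha, hd⟩ := hu
  obtain ⟨p1, hp1, hl1⟩ := hG.isConnected.exists_path_of_dist r u'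
  obtain ⟨p2, hp2, hl2⟩ := hG.isConnected.exists_path_of_dist r u
  have hv1 : v ∉ p1.support := notMem_support_of_lt hG p1 (by omega)
  have hv2 : v ∉ p2.support := notMem_support_of_lt hG p2 (by omega)
  have hq1 : (SimpleGraph.Walk.cons ha' p1.reverse).IsPath :=
    hp1.reverse.cons (by simpa using hv1)
  have hq2 : (SimpleGraph.Walk.cons ha p2.reverse).IsPath :=
    hp2.reverse.cons (by simpa using hv2)
  have := (hG.existsUnique_path v r).unique hq1 hq2
  have := congr_arg (fun w => SimpleGraph.Walk.getVert w 1) this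
  simpa [SimpleGraph.Walk.getVert_cons_succ, SimpleGraph.Walk.getVert_zero] using this

/-- Child counts per level for the counterexample tree. -/
def ccB (k : ℕ) : ℕ → ℕ := fun ℓ =>
  if ℓ = 0 then 5 else if ℓ = 1 then k - 4 else if ℓ = 2 then 4 else if ℓ = 3 then 2
  else if ℓ < k - 1 then 1 else 0

/-- The level profile of the `-2`-eigenvector. -/
noncomputable def omg (k : ℕ) : ℕ → ℝ := fun j =>
  (-1) ^ j * (if j = 0 then 10 * (k : ℝ) - 40 else if j = 1 then 4 * (k : ℝ) - 16
    else if j = 2 then -2 else (j : ℝ) - (k : ℝ))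

lemma betheKey {k : ℕ} (hk : Even k) (hk6 : 6 ≤ k) (ℓ : ℕ) (hℓ : ℓ ≤ k - 1) :
    (if ℓ = 0 then (0:ℝ) else omg k (ℓ - 1)) + (ccB k ℓ : ℝ) * omg k (ℓ + 1)
      = -2 * omg k ℓ := by
  rcases Nat.lt_or_ge ℓ 4 with h4 | h4
  · interval_cases ℓ
    · norm_num [omg, ccB]; ring
    · have : ((k - 4 : ℕ) : ℝ) = (k : ℝ) - 4 := by
        push_cast [Nat.cast_sub (by omega : 4 ≤ k)]; ring
      norm_num [omg, ccB, this]; ring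
    · norm_num [omg, ccB]; ring
    · norm_num [omg, ccB]; ring
  · rcases Nat.lt_or_ge ℓ (k - 1) with hlt | hge
    · -- 4 ≤ ℓ ≤ k - 2
      obtain ⟨m, rfl⟩ : ∃ m, ℓ = m + 1 := ⟨ℓ - 1, by omega⟩
      have hm3 : 3 ≤ m := by omega
      have hcc : ccB k (m + 1) = 1 := by
        simp only [ccB]
        rw [if_neg (by omega), if_neg (by omega), if_neg (by omega), if_neg (by omega),
          if_pos (by omega)]
      have ho1 : omg k (m + 1 - 1) = (-1) ^ m * ((m : ℝ) - k) := by
        simp only [omg, Nat.add_sub_cancel]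
        rw [if_neg (by omega), if_neg (by omega), if_neg (by omega)]
      have ho2 : omg k (m + 1 + 1) = (-1) ^ (m + 2) * (((m : ℝ) + 2) - k) := by
        simp only [omg]
        rw [if_neg (by omega), if_neg (by omega), if_neg (by omega)]
        push_cast; ring
      have ho3 : omg k (m + 1) = (-1) ^ (m + 1) * (((m : ℝ) + 1) - k) := by
        simp only [omg]
        rw [if_neg (by omega), if_neg (by omega), if_neg (by omega)]
        push_cast; ring
      rw [if_neg (by omega), hcc, ho1, ho2, ho3]
      ring
    · -- ℓ = k - 1
      have hℓk : ℓ = k - 1 := by omega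
      subst hℓk
      have hcc : ccB k (k - 1) = 0 := by
        simp only [ccB]
        rw [if_neg (by omega), if_neg (by omega), if_neg (by omega), if_neg (by omega),
          if_neg (by omega)]
      have ho1 : omg k (k - 1 - 1) = -2 := by
        have hkk : k - 1 - 1 = k - 2 := by omega
        rw [hkk]
        simp only [omg]
        rw [if_neg (by omega), if_neg (by omega), if_neg (by omega)]
        have he : Even (k - 2) := (Nat.even_sub (by omega : 2 ≤ k)).mpr (by simp [hk])
        rw [he.neg_one_pow]
        push_cast [Nat.cast_sub (by omega : 2 ≤ k)]; ring
      have ho2 : omg k (k - 1) = 1 := by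
        simp only [omg]
        rw [if_neg (by omega), if_neg (by omega), if_neg (by omega)]
        have ho : Odd (k - 1) := Nat.Even.sub_odd (by omega) hk (by norm_num)
        rw [ho.neg_one_pow]
        push_cast [Nat.cast_sub (by omega : 1 ≤ k)]; ring
      rw [if_neg (by omega), hcc, ho1, ho2]
      ring

lemma altsum (c : ℝ) : ∀ m : ℕ, ∑ i ∈ Finset.range (2 * m), ((-1:ℝ) ^ i * ((i : ℝ) + c)) = -m
  | 0 => by simp
  | (m + 1) => by
    have h : 2 * (m + 1) = (2 * m + 1) + 1 := by omega
    rw [h, Finset.sum_range_succ, Finset.sum_range_succ, altsum c m]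
    have h1 : ((-1:ℝ)) ^ (2 * m) = 1 := (even_two_mul m).neg_one_pow
    have h2 : ((-1:ℝ)) ^ (2 * m + 1) = -1 := by rw [pow_succ, h1]; ring
    push_cast
    rw [h1, h2]
    ring

end BetheAux

open BetheAux Polynomial


/-- For even `k ≥ 6`, the generalized Bethe tree
`B(5, k-3, 5, 3, 2, …, 2)` with `k` levels has at most `k - 1` main eigenvalues. -/
theorem counterexample_main_eigenvalues {V : Type*} [Fintype V] (G : SimpleGraph V)
    (r : V) (k : ℕ) (hk : Even k) (hk6 : 6 ≤ k)
    (hT : IsGenBetheTree G r k (counterexampleDegrees k)) :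
    (mainSpectrum G).Finite ∧ (mainSpectrum G).ncard ≤ k - 1 := by
  classical
  obtain ⟨hG, hd2, hdegmid, hdegleaf, hdistle⟩ := hT
  have hconn := hG.isConnected
  -- degree of each vertex as a function of its level
  have hdeg : ∀ v : V, (G.neighborFinset v).card =
      (if G.dist r v < k - 1 then counterexampleDegrees k (G.dist r v + 1) else 1) := by
    intro v
    have hcard : (G.neighborSet v).ncard = (G.neighborFinset v).card := by
      rw [SimpleGraph.neighborFinset_def, Set.ncard_eq_toFinset_card']
    by_cases h : G.dist r v < k - 1
    · rw [if_pos h, ← hcard]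
      exact hdegmid (G.dist r v + 1) (by omega) (by omega) v (by omega)
    · rw [if_neg h, ← hcard]
      exact hdegleaf v (by have := hdistle v; omega)
  -- number of neighbors one level closer
  have hpar : ∀ v : V,
      ((G.neighborFinset v).filter (fun u => G.dist r u + 1 = G.dist r v)).card
        = if G.dist r v = 0 then 0 else 1 := by
    intro v
    by_cases h0 : G.dist r v = 0
    · rw [if_pos h0, Finset.card_eq_zero]
      refine Finset.filter_false_of_mem fun u _ => by omega
    · rw [if_neg h0]
      obtain ⟨u, hu, huniq⟩ := existsUnique_parent hG h0
      rw [Finset.card_eq_one]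
      refine ⟨u, ?_⟩
      ext u'
      simp only [Finset.mem_filter, SimpleGraph.mem_neighborFinset, Finset.mem_singleton]
      constructor
      · rintro ⟨ha, hd⟩; exact huniq u' ⟨ha, hd⟩
      · rintro rfl; exact ⟨hu.1, hu.2⟩
  -- number of neighbors one level further
  have hchild : ∀ v : V,
      ((G.neighborFinset v).filter (fun u => G.dist r u = G.dist r v + 1)).card
        = ccB k (G.dist r v) := by
    intro v
    have hsplit := Finset.card_filter_add_card_filter_not
      (s := G.neighborFinset v) (p := fun u => G.dist r u = G.dist r v + 1)
    have hcongr : (G.neighborFinset v).filter (fun u => ¬ G.dist r u = G.dist r v + 1)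
        = (G.neighborFinset v).filter (fun u => G.dist r u + 1 = G.dist r v) := by
      refine Finset.filter_congr fun u hu => ?_
      have := neighbor_level (r := r) hG ((SimpleGraph.mem_neighborFinset G v u).mp hu)
      constructor <;> (intro; omega)
    rw [hcongr, hpar v] at hsplit
    have hdv := hdeg v
    have hle := hdistle v
    set ℓ := G.dist r v with hℓ
    rcases Nat.lt_or_ge ℓ 4 with h4 | h4
    · interval_cases ℓ <;>
        (rw [if_pos (by omega)] at hdv;
         norm_num [counterexampleDegrees, ccB] at hdv hsplit ⊢;
         omega)
    · rcases Nat.lt_or_ge ℓ (k - 1) with hlt | hge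
      · have hd' : (G.neighborFinset v).card = 2 := by
          rw [hdv, if_pos hlt]
          simp only [counterexampleDegrees]
          rw [if_neg (by omega), if_neg (by omega), if_neg (by omega), if_neg (by omega)]
        have hcc : ccB k ℓ = 1 := by
          simp only [ccB]
          rw [if_neg (by omega), if_neg (by omega), if_neg (by omega), if_neg (by omega),
            if_pos hlt]
        rw [hcc]
        rw [if_neg (by omega)] at hsplit
        omega
      · have hd' : (G.neighborFinset v).card = 1 := by rw [hdv, if_neg (by omega)]
        have hcc : ccB k ℓ = 0 := by
          simp only [ccB]
          rw [if_neg (by omega), if_neg (by omega), if_neg (by omega), if_neg (by omega),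
            if_neg (by omega)]
        rw [hcc]
        rw [if_neg (by omega)] at hsplit
        omega
  -- sum over the neighbors of a level function
  have hsum : ∀ (f : ℕ → ℝ) (v : V), ∑ u ∈ G.neighborFinset v, f (G.dist r u)
      = (if G.dist r v = 0 then 0 else f (G.dist r v - 1))
        + (ccB k (G.dist r v) : ℝ) * f (G.dist r v + 1) := by
    intro f v
    rw [← Finset.sum_filter_add_sum_filter_not (G.neighborFinset v)
      (fun u => G.dist r u = G.dist r v + 1)]
    have h1 : ∑ u ∈ (G.neighborFinset v).filter (fun u => G.dist r u = G.dist r v + 1),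
        f (G.dist r u) = (ccB k (G.dist r v) : ℝ) * f (G.dist r v + 1) := by
      rw [Finset.sum_congr rfl (fun u hu => by
        rw [(Finset.mem_filter.mp hu).2])]
      rw [Finset.sum_const, hchild v, nsmul_eq_mul]
    have hcongr : (G.neighborFinset v).filter (fun u => ¬ G.dist r u = G.dist r v + 1)
        = (G.neighborFinset v).filter (fun u => G.dist r u + 1 = G.dist r v) := by
      refine Finset.filter_congr fun u hu => ?_
      have := neighbor_level (r := r) hG ((SimpleGraph.mem_neighborFinset G v u).mp hu)
      constructor <;> (intro; omega)
    have h2 : ∑ u ∈ (G.neighborFinset v).filter (fun u => ¬ G.dist r u = G.dist r v + 1),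
        f (G.dist r u) = (if G.dist r v = 0 then 0 else f (G.dist r v - 1)) := by
      rw [hcongr]
      rw [Finset.sum_congr rfl (fun u hu => by
        have := (Finset.mem_filter.mp hu).2
        rw [show G.dist r u = G.dist r v - 1 by omega])]
      rw [Finset.sum_const, hpar v]
      by_cases h0 : G.dist r v = 0
      · rw [if_pos h0, if_pos h0]; simp
      · rw [if_neg h0, if_neg h0]; simp
    rw [h1, h2, add_comm]
  -- the adjacency matrix maps level functions to level functions
  have hlevel : ∀ g : ℕ → ℝ, (adjMat G) *ᵥ (fun v => g (G.dist r v)) =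
      fun v => (if G.dist r v = 0 then (0:ℝ) else g (G.dist r v - 1))
        + (ccB k (G.dist r v) : ℝ) * g (G.dist r v + 1) := by
    intro g
    funext v
    have hMv : (adjMat G *ᵥ fun v => g (G.dist r v)) v
        = ∑ u ∈ G.neighborFinset v, g (G.dist r u) := by
      simp only [Matrix.mulVec, dotProduct, adjMat, Matrix.of_apply]
      rw [Finset.sum_congr rfl (fun u _ => by
        rw [ite_mul, one_mul, zero_mul])]
      rw [← Finset.sum_filter, SimpleGraph.neighborFinset_eq_filter]
    rw [hMv, hsum g v]
  -- the eigenvector w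
  set w : V → ℝ := fun v => omg k (G.dist r v) with hw
  have heig : (adjMat G) *ᵥ w = (-2 : ℝ) • w := by
    rw [hlevel (omg k)]
    funext v
    have := betheKey hk hk6 (G.dist r v) (hdistle v)
    simpa [hw] using this
  -- level counts
  set n : ℕ → ℕ := fun j => (univ.filter fun v : V => G.dist r v = j).card with hn
  have hn0 : n 0 = 1 := by
    rw [hn, Finset.card_eq_one]
    refine ⟨r, ?_⟩
    ext v
    simp only [Finset.mem_filter, Finset.mem_univ, true_and, Finset.mem_singleton]
    rw [hconn.dist_eq_zero_iff]
    exact comm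
  have hnrec : ∀ j, n (j + 1) = n j * ccB k j := by
    intro j
    have hpex : ∀ u : V, G.dist r u = j + 1 →
        ∃ x, (G.Adj u x ∧ G.dist r x + 1 = G.dist r u) ∧
          ∀ y, (G.Adj u y ∧ G.dist r y + 1 = G.dist r u) → y = x :=
      fun u hu => existsUnique_parent hG (by omega)
    set par : V → V := fun u =>
      if h : G.dist r u = j + 1 then (hpex u h).choose else u with hparf
    have hmap : ∀ u ∈ univ.filter (fun v : V => G.dist r v = j + 1),
        par u ∈ univ.filter (fun v : V => G.dist r v = j) := by
      intro u hu
      have hu' : G.dist r u = j + 1 := (Finset.mem_filter.mp hu).2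
      have hspec := (hpex u hu').choose_spec
      simp only [hparf, dif_pos hu']
      simp only [Finset.mem_filter, Finset.mem_univ, true_and]
      omega
    have hkey := Finset.card_eq_sum_card_fiberwise hmap
    simp only [hn]
    rw [hkey]
    have hfib : ∀ v ∈ univ.filter (fun v : V => G.dist r v = j),
        ((univ.filter (fun v : V => G.dist r v = j + 1)).filter (fun u => par u = v)).card
          = ccB k j := by
      intro v hv
      have hvj : G.dist r v = j := (Finset.mem_filter.mp hv).2
      have : (univ.filter (fun v : V => G.dist r v = j + 1)).filter (fun u => par u = v)
          = (G.neighborFinset v).filter (fun u => G.dist r u = G.dist r v + 1) := by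
        ext u
        simp only [Finset.mem_filter, Finset.mem_univ, true_and,
          SimpleGraph.mem_neighborFinset, hvj]
        constructor
        · rintro ⟨hu1, hu2⟩
          have hspec := (hpex u hu1).choose_spec
          rw [hparf] at hu2
          simp only [dif_pos hu1] at hu2
          rw [← hu2]
          exact ⟨hspec.1.1.symm, hu1⟩
        · rintro ⟨hadj, hdu⟩
          refine ⟨hdu, ?_⟩
          have hspec := (hpex u hdu).choose_spec
          have := hspec.2 v ⟨hadj.symm, by omega⟩
          rw [hparf]
          simp only [dif_pos hdu]
          exact this.symm
      rw [this, hchild v, hvj]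
    rw [Finset.sum_congr rfl hfib, Finset.sum_const, smul_eq_mul]
  have hwsum : ∑ v, w v = 0 := by
    have hfib : ∑ v, w v = ∑ j ∈ Finset.range k, (n j : ℝ) * omg k j := by
      rw [← Finset.sum_fiberwise_of_maps_to (g := fun v : V => G.dist r v)
        (t := Finset.range k)
        (fun v _ => by
          show G.dist r v ∈ Finset.range k
          rw [Finset.mem_range]
          have := hdistle v; omega)
        (f := fun v => w v)]
      refine Finset.sum_congr rfl fun j _ => ?_
      have h1 : ∀ v ∈ univ.filter (fun v : V => G.dist r v = j), w v = omg k j := by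
        intro v hv
        have hvj : G.dist r v = j := by simpa using (Finset.mem_filter.mp hv).2
        simp only [hw]
        rw [hvj]
      rw [Finset.sum_congr rfl h1, Finset.sum_const, nsmul_eq_mul]
    -- the individual level counts
    have hn1 : n 1 = 5 := by rw [hnrec 0, hn0]; norm_num [ccB]
    have hn2 : n 2 = 5 * (k - 4) := by rw [hnrec 1, hn1]; norm_num [ccB]
    have hn3 : n 3 = 20 * (k - 4) := by rw [hnrec 2, hn2]; norm_num [ccB]; omega
    have hn4 : n 4 = 40 * (k - 4) := by rw [hnrec 3, hn3]; norm_num [ccB]; omega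
    have hntail : ∀ j, 4 ≤ j → j ≤ k - 1 → n j = 40 * (k - 4) := by
      intro j h4 hle
      induction j, h4 using Nat.le_induction with
      | base => exact hn4
      | succ m hm ih =>
        rw [hnrec m, ih (by omega)]
        have : ccB k m = 1 := by
          simp only [ccB]
          rw [if_neg (by omega), if_neg (by omega), if_neg (by omega), if_neg (by omega),
            if_pos (by omega)]
        rw [this, mul_one]
    rw [hfib]
    rw [Finset.range_eq_Ico, ← Finset.sum_Ico_consecutive _ (by omega : (0:ℕ) ≤ 4)
      (by omega : 4 ≤ k)]
    have htail : ∑ j ∈ Finset.Ico 4 k, (n j : ℝ) * omg k j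
        = (40 * (k - 4) : ℕ) * ∑ j ∈ Finset.Ico 4 k, ((-1:ℝ)) ^ j * ((j:ℝ) - (k:ℝ)) := by
      rw [Finset.mul_sum]
      refine Finset.sum_congr rfl fun j hj => ?_
      obtain ⟨hj4, hjk⟩ := Finset.mem_Ico.mp hj
      rw [hntail j hj4 (by omega)]
      have : omg k j = ((-1:ℝ)) ^ j * ((j:ℝ) - (k:ℝ)) := by
        simp only [omg]
        rw [if_neg (by omega), if_neg (by omega), if_neg (by omega)]
      rw [this]
    rw [htail]
    obtain ⟨m, hm⟩ := hk
    have hm3 : 3 ≤ m := by omega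
    have h24 : k - 4 = 2 * (m - 2) := by omega
    have htail2 : ∑ j ∈ Finset.Ico 4 k, ((-1:ℝ)) ^ j * ((j:ℝ) - (k:ℝ))
        = -((m:ℝ) - 2) := by
      rw [Finset.sum_Ico_eq_sum_range]
      have : ∀ i ∈ Finset.range (k - 4), ((-1:ℝ)) ^ (4 + i) * (((4 + i : ℕ):ℝ) - (k:ℝ))
          = ((-1:ℝ)) ^ i * ((i:ℝ) + ((4:ℝ) - (k:ℝ))) := by
        intro i _
        rw [pow_add]
        push_cast
        ring
      rw [Finset.sum_congr rfl this, h24, altsum ((4:ℝ) - (k:ℝ)) (m - 2)]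
      rw [Nat.cast_sub (by omega : 2 ≤ m)]
      push_cast
      ring
    rw [htail2]
    -- now the head sum
    have h04 : Finset.Ico 0 4 = Finset.range 4 := by rw [Finset.range_eq_Ico]
    rw [h04]
    rw [Finset.sum_range_succ, Finset.sum_range_succ, Finset.sum_range_succ,
      Finset.sum_range_succ, Finset.sum_range_zero]
    rw [hn0, hn1, hn2, hn3]
    have hkR : ((k:ℝ)) = (m:ℝ) + (m:ℝ) := by exact_mod_cast congrArg Nat.cast hm
    have hc1 : ((5 * (k - 4) : ℕ) : ℝ) = 5 * ((k:ℝ) - 4) := by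
      push_cast [Nat.cast_sub (by omega : 4 ≤ k)]; ring
    have hc2 : ((20 * (k - 4) : ℕ) : ℝ) = 20 * ((k:ℝ) - 4) := by
      push_cast [Nat.cast_sub (by omega : 4 ≤ k)]; ring
    have hc3 : ((40 * (k - 4) : ℕ) : ℝ) = 40 * ((k:ℝ) - 4) := by
      push_cast [Nat.cast_sub (by omega : 4 ≤ k)]; ring
    rw [hc1, hc2, hc3]
    simp only [omg]
    norm_num
    rw [hkR]
    ring
  -- the span of level-indicator functions
  set χ : ℕ → (V → ℝ) := fun j v => if G.dist r v = j then (1:ℝ) else 0 with hχ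
  set L : Submodule ℝ (V → ℝ) := Submodule.span ℝ (Set.range (fun j : Fin k => χ j)) with hL
  have hmemL : ∀ g : ℕ → ℝ, (fun v => g (G.dist r v)) ∈ L := by
    intro g
    have hrepr : (fun v => g (G.dist r v)) = ∑ j : Fin k, g j • χ (j : ℕ) := by
      funext v
      rw [Finset.sum_apply]
      have hv : G.dist r v < k := by have := hdistle v; omega
      rw [Finset.sum_eq_single (⟨G.dist r v, hv⟩ : Fin k)]
      · simp [hχ]
      · intro b _ hb
        have hbv : G.dist r v ≠ (b : ℕ) := by
          intro h
          apply hb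
          apply Fin.ext
          exact h.symm
        simp [hχ, hbv]
      · intro h
        exact absurd (Finset.mem_univ _) h
    rw [hrepr]
    exact Submodule.sum_mem _ fun j _ =>
      Submodule.smul_mem _ _ (Submodule.subset_span ⟨j, rfl⟩)
  -- the linear functional ⟨w, ·⟩
  set φ : (V → ℝ) →ₗ[ℝ] ℝ :=
    { toFun := fun x => ∑ v, w v * x v
      map_add' := by intros a b; simp [mul_add, Finset.sum_add_distrib]
      map_smul' := by
        intros c x
        simp only [smul_eq_mul, RingHom.id_apply, Finset.mul_sum, Pi.smul_apply]
        exact Finset.sum_congr rfl fun v _ => by ring } with hφ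
  have hφw : 0 < φ w := by
    have hwr : w r = 10 * (k : ℝ) - 40 := by
      simp [hw, omg, SimpleGraph.dist_self]
    have hk6R : (6:ℝ) ≤ (k:ℝ) := by exact_mod_cast hk6
    have hpos : (0:ℝ) < w r * w r := by rw [hwr]; nlinarith
    have hle : w r * w r ≤ ∑ v, w v * w v :=
      Finset.single_le_sum (f := fun v => w v * w v)
        (fun v _ => mul_self_nonneg _) (Finset.mem_univ r)
    have : φ w = ∑ v, w v * w v := rfl
    rw [this]
    linarith
  set U : Submodule ℝ (V → ℝ) := L ⊓ LinearMap.ker φ with hU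
  have hfinU : Module.finrank ℝ U ≤ k - 1 := by
    have hUL : U < L := by
      refine lt_of_le_of_ne inf_le_left fun h => ?_
      have hwU : w ∈ U := by
        rw [h]
        exact hmemL (omg k)
      have : φ w = 0 := LinearMap.mem_ker.mp hwU.2
      rw [this] at hφw
      exact lt_irrefl 0 hφw
    have hfinL : Module.finrank ℝ L ≤ k := by
      have := finrank_range_le_card (R := ℝ) (fun j : Fin k => χ (j : ℕ))
      simpa [Set.finrank, Fintype.card_fin, hL] using this
    have := Submodule.finrank_lt_finrank_of_lt hUL
    omega
  -- the Krylov vectors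
  set y : ℕ → (V → ℝ) := fun i => ((adjMat G) ^ i) *ᵥ (fun _ => (1:ℝ)) with hy
  have hsymm : (adjMat G)ᵀ = adjMat G := by
    ext a b
    simp [adjMat, Matrix.transpose_apply, SimpleGraph.adj_comm]
  have hylevel : ∀ i, ∃ g : ℕ → ℝ, y i = fun v => g (G.dist r v) := by
    intro i
    induction i with
    | zero =>
      exact ⟨fun _ => 1, by simp [hy, Matrix.one_mulVec]⟩
    | succ i ih =>
      obtain ⟨g, hg⟩ := ih
      refine ⟨fun ℓ => (if ℓ = 0 then (0:ℝ) else g (ℓ - 1)) + (ccB k ℓ : ℝ) * g (ℓ + 1), ?_⟩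
      have : y (i + 1) = (adjMat G) *ᵥ (y i) := by
        simp only [hy]
        rw [pow_succ', ← Matrix.mulVec_mulVec]
      rw [this, hg, hlevel g]
  have hyker : ∀ i, φ (y i) = 0 := by
    intro i
    induction i with
    | zero =>
      have : φ (y 0) = ∑ v, w v := by
        simp [hy, Matrix.one_mulVec, hφ]
      rw [this, hwsum]
    | succ i ih =>
      have hstep : y (i + 1) = (adjMat G) *ᵥ (y i) := by
        simp only [hy]
        rw [pow_succ', ← Matrix.mulVec_mulVec]
      have : φ (y (i + 1)) = w ⬝ᵥ ((adjMat G) *ᵥ (y i)) := by rw [hstep]; rfl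
      rw [this, Matrix.dotProduct_mulVec, ← hsymm, Matrix.vecMul_transpose, heig,
        smul_dotProduct]
      have : w ⬝ᵥ y i = φ (y i) := rfl
      rw [this, ih]
      simp
  have hyU : ∀ i, y i ∈ U := by
    intro i
    obtain ⟨g, hg⟩ := hylevel i
    exact ⟨by rw [hg]; exact hmemL g, LinearMap.mem_ker.mpr (hyker i)⟩
  -- linear dependence
  obtain ⟨g, hgsum, i0, hgi0⟩ :
      ∃ g : Fin k → ℝ, ∑ i : Fin k, g i • y i = 0 ∧ ∃ i, g i ≠ 0 := by
    have hdep : ¬ LinearIndependent ℝ (fun i : Fin k => (⟨y i, hyU i⟩ : U)) := by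
      intro h
      have := h.fintype_card_le_finrank
      rw [Fintype.card_fin] at this
      omega
    rw [Fintype.linearIndependent_iff] at hdep
    push_neg at hdep
    obtain ⟨g, hg0, i0, hi0⟩ := hdep
    refine ⟨g, ?_, i0, hi0⟩
    have := congrArg (fun z : U => (z : V → ℝ)) hg0
    simpa using this
  -- the annihilating polynomial
  set p : Polynomial ℝ := ∑ i : Fin k, Polynomial.C (g i) * Polynomial.X ^ (i : ℕ) with hp
  have hpne : p ≠ 0 := by
    intro h
    have hco : p.coeff (i0 : ℕ) = g i0 := by
      rw [hp, Polynomial.finset_sum_coeff]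
      rw [Finset.sum_eq_single i0]
      · simp [Polynomial.coeff_C_mul, Polynomial.coeff_X_pow]
      · intro b _ hb
        have : (i0 : ℕ) ≠ (b : ℕ) := fun hh => hb (Fin.ext hh.symm)
        simp [Polynomial.coeff_C_mul, Polynomial.coeff_X_pow, this]
      · intro h'
        exact absurd (Finset.mem_univ _) h'
    rw [h] at hco
    simp at hco
    exact hgi0 hco.symm
  have hpdeg : p.natDegree ≤ k - 1 := by
    rw [hp]
    refine Polynomial.natDegree_sum_le_of_forall_le _ _ fun i _ => ?_
    refine le_trans (Polynomial.natDegree_C_mul_X_pow_le _ _) ?_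
    have := i.isLt
    omega
  -- every main eigenvalue is a root of p
  have hsubset : mainSpectrum G ⊆ ↑(p.roots.toFinset) := by
    rintro lam ⟨x, hx, hxs⟩
    have hx1 : x ⬝ᵥ (fun _ => (1:ℝ)) = ∑ v, x v := by
      simp [dotProduct]
    have hxi : ∀ i : ℕ, x ⬝ᵥ y i = lam ^ i * (∑ v, x v) := by
      intro i
      induction i with
      | zero =>
        simp [hy, Matrix.one_mulVec, hx1]
      | succ i ih =>
        have hstep : y (i + 1) = (adjMat G) *ᵥ (y i) := by
          simp only [hy]
          rw [pow_succ', ← Matrix.mulVec_mulVec]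
        rw [hstep, Matrix.dotProduct_mulVec, ← hsymm, Matrix.vecMul_transpose, hx,
          smul_dotProduct, ih]
        rw [pow_succ, smul_eq_mul]
        ring
    have hdot0 : x ⬝ᵥ (∑ i : Fin k, g i • y i) = 0 := by rw [hgsum]; simp
    have hdots : x ⬝ᵥ (∑ i : Fin k, g i • y i) = ∑ i : Fin k, g i * (x ⬝ᵥ y i) := by
      simp only [dotProduct, Finset.sum_apply, Pi.smul_apply, smul_eq_mul,
        Finset.mul_sum]
      rw [Finset.sum_comm]
      refine Finset.sum_congr rfl fun i _ => Finset.sum_congr rfl fun v _ => by ring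
    have heval : Polynomial.eval lam p * (∑ v, x v) = 0 := by
      have : Polynomial.eval lam p = ∑ i : Fin k, g i * lam ^ (i : ℕ) := by
        rw [hp, Polynomial.eval_finset_sum]
        refine Finset.sum_congr rfl fun i _ => ?_
        simp
      rw [this, Finset.sum_mul]
      rw [← hdot0, hdots]
      refine Finset.sum_congr rfl fun i _ => ?_
      rw [hxi i]
      ring
    have hroot : Polynomial.eval lam p = 0 := by
      rcases mul_eq_zero.mp heval with h | h
      · exact h
      · exact absurd h hxs
    simp only [Finset.coe_sort_coe, Multiset.mem_toFinset, Finset.mem_coe]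
    rw [Polynomial.mem_roots hpne]
    exact hroot
  have hfin : (mainSpectrum G).Finite := Set.Finite.subset (p.roots.toFinset).finite_toSet hsubset
  refine ⟨hfin, ?_⟩
  calc (mainSpectrum G).ncard ≤ (↑(p.roots.toFinset) : Set ℝ).ncard :=
        Set.ncard_le_ncard hsubset (p.roots.toFinset).finite_toSet
    _ = p.roots.toFinset.card := Set.ncard_coe_finset _
    _ ≤ Multiset.card p.roots := Multiset.toFinset_card_le _
    _ ≤ p.natDegree := Polynomial.card_roots' p
    _ ≤ k - 1 := hpdeg
end

section
/- For any integers k ≥ 3 and d ≥ 2, the Bethe tree B_{d,k} has exactly k main eigenvalues; that is, the set of main eigenvalues of B_{d,k} has cardinality exactly k. -/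
/-! Look for eigenvectors that are constant on the levels of the tree. A level profile `f` is an
eigenvector for `λ` iff `f (i - 1) + d f (i + 1) = λ f i` with `f (-1) = f k = 0`, solved by
`f i = d ^ (-i/2) sin ((i + 1) θ)` with `λ = 2 √d cos θ` and `θ = jπ / (k + 1)`, `j = 1, …, k`.
These `k` eigenvalues are distinct, and the entry sums, proportional to
`∑_{i<k} √d ^ i sin ((i + 1) θ)`, are nonzero by a closed form of that sum, so they are main.
Their eigenvectors are independent, hence span all level-constant vectors, among them the
all-ones vector `𝟙`. By symmetry of the adjacency matrix, an eigenvector for any other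
eigenvalue is orthogonal to all of them, hence to `𝟙`. -/

open Matrix Finset

open Real

theorem sin_sub_add_sin_add (x y : ℝ) : sin (x - y) + sin (x + y) = 2 * sin x * cos y := by
  rw [sin_sub, sin_add]; ring

theorem pi_mul_div_mem_Ioo {j k : ℕ} (hj : 0 < j) (hjk : j < k) :
    π * j / k ∈ Set.Ioo 0 π := by
  have hk : (0 : ℝ) < k := by exact_mod_cast hj.trans hjk
  have hj' : (0 : ℝ) < j := by exact_mod_cast hj
  refine ⟨by positivity, (div_lt_iff₀ hk).mpr ?_⟩
  have : (j : ℝ) < k := by exact_mod_cast hjk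
  nlinarith [pi_pos]

theorem injective_cos_pi_mul_div (k : ℕ) :
    Function.Injective fun j : Fin k => cos (π * (j.val + 1 : ℕ) / (k + 1 : ℕ)) := by
  intro a b hab
  have hθ : ∀ j : Fin k, π * (j.val + 1 : ℕ) / (k + 1 : ℕ) ∈ Set.Icc 0 π := fun j =>
    Set.Ioo_subset_Icc_self (pi_mul_div_mem_Ioo j.val.succ_pos (by omega))
  have h := injOn_cos (hθ a) (hθ b) hab
  field_simp at h
  push_cast at h
  exact Fin.ext (by exact_mod_cast add_right_cancel h)

/-- A vertex at depth `i` of the Bethe tree carries `dampedSin √d θ (i + 1)`; the shift makes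
`dampedSin s θ 0 = 0` stand in for the missing parent of the root. -/
noncomputable def dampedSin (s θ : ℝ) (n : ℕ) : ℝ := s⁻¹ ^ n * sin (n * θ)

theorem dampedSin_zero (s θ : ℝ) : dampedSin s θ 0 = 0 := by simp [dampedSin]

theorem dampedSin_add_two {s : ℝ} (hs : s ≠ 0) (θ : ℝ) (n : ℕ) :
    dampedSin s θ n + s ^ 2 * dampedSin s θ (n + 2) = 2 * s * cos θ * dampedSin s θ (n + 1) := by
  have h := sin_sub_add_sin_add ((n + 1) * θ) θ
  rw [show ((n : ℝ) + 1) * θ - θ = n * θ by ring,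
    show ((n : ℝ) + 1) * θ + θ = (n + 2) * θ by ring] at h
  have ht : s * s⁻¹ = 1 := mul_inv_cancel₀ hs
  simp only [dampedSin]
  push_cast
  linear_combination s⁻¹ ^ n * h +
    s⁻¹ ^ n * ((s * s⁻¹ + 1) * sin ((n + 2) * θ) - 2 * cos θ * sin ((n + 1) * θ)) * ht

theorem sum_range_pow_mul_sin_mul (s θ : ℝ) (m : ℕ) :
    (∑ i ∈ range m, s ^ i * sin ((i + 1) * θ)) * (1 - 2 * s * cos θ + s ^ 2) =
      sin θ - s ^ m * sin ((m + 1) * θ) + s ^ (m + 1) * sin (m * θ) := by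
  induction m with
  | zero => simp
  | succ m ih =>
    have h := sin_sub_add_sin_add ((m + 1) * θ) θ
    rw [show ((m : ℝ) + 1) * θ - θ = m * θ by ring,
      show ((m : ℝ) + 1) * θ + θ = (m + 1 + 1) * θ by ring] at h
    rw [sum_range_succ, add_mul, ih]
    push_cast
    linear_combination s ^ (m + 1) * h

theorem sum_range_pow_mul_sin_ne_zero {s θ : ℝ} {m : ℕ} (hs : 0 ≤ s) (hs1 : s ≠ 1)
    (hθ : sin θ ≠ 0) (hm : sin ((m + 1) * θ) = 0) :
    ∑ i ∈ range m, s ^ i * sin ((i + 1) * θ) ≠ 0 := by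
  intro h
  have hid := sum_range_pow_mul_sin_mul s θ m
  have hsin : sin (m * θ) = -cos ((m + 1) * θ) * sin θ := by
    rw [show (m : ℝ) * θ = (m + 1) * θ - θ by ring, sin_sub, hm]; ring
  have hcos : cos ((m + 1) * θ) ^ 2 = 1 := by nlinarith [sin_sq_add_cos_sq ((m + 1) * θ)]
  rw [h, zero_mul, hm, hsin] at hid
  have hc : s ^ (m + 1) * cos ((m + 1) * θ) = 1 := by
    have : sin θ * (1 - s ^ (m + 1) * cos ((m + 1) * θ)) = 0 := by linear_combination -hid
    linarith [(mul_eq_zero.mp this).resolve_left hθ]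
  have hpow : (s ^ (m + 1)) ^ 2 = 1 := by
    linear_combination -(s ^ (m + 1)) ^ 2 * hcos + (s ^ (m + 1) * cos ((m + 1) * θ) + 1) * hc
  rw [← pow_mul, pow_eq_one_iff_of_nonneg hs (by omega)] at hpow
  exact hs1 hpow

theorem Matrix.IsSymm.setOf_mulVec_eq_smul_sum_ne_zero_eq_range {K n ι : Type*} [Field K]
    [Fintype n] [Fintype ι] {A : Matrix n n K} (hA : A.IsSymm) {x : ι → n → K} {μ : ι → K}
    (hx : ∀ j, A *ᵥ x j = μ j • x j) (hsum : ∀ j, ∑ v, x j v ≠ 0)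
    (hone : 1 ∈ Submodule.span K (Set.range x)) :
    {c | ∃ y, A *ᵥ y = c • y ∧ ∑ v, y v ≠ 0} = Set.range μ := by
  ext c
  constructor
  · rintro ⟨y, hy, hy1⟩
    by_contra hc
    have horth : ∀ j, y ⬝ᵥ x j = 0 := fun j => by
      have h : (c - μ j) * (y ⬝ᵥ x j) = 0 := by
        calc (c - μ j) * (y ⬝ᵥ x j) = (A *ᵥ y) ⬝ᵥ x j - y ⬝ᵥ (A *ᵥ x j) := by
              rw [hy, hx, smul_dotProduct, dotProduct_smul, smul_eq_mul, smul_eq_mul]; ring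
          _ = 0 := by rw [dotProduct_mulVec, ← mulVec_transpose, hA.eq, sub_self]
      exact (mul_eq_zero.mp h).resolve_left (sub_ne_zero.mpr fun h => hc ⟨j, h.symm⟩)
    obtain ⟨a, ha⟩ := (Submodule.mem_span_range_iff_exists_fun K).mp hone
    apply hy1
    rw [← dotProduct_one, ← ha, dotProduct_sum]
    simp [dotProduct_smul, horth]
  · rintro ⟨j, rfl⟩
    exact ⟨x j, hx j, hsum j⟩

theorem Matrix.linearIndependent_of_mulVec_eq_smul {K n ι : Type*} [Field K] [Fintype n]
    {A : Matrix n n K} {x : ι → n → K} {μ : ι → K}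
    (hx : ∀ j, A *ᵥ x j = μ j • x j) (hμ : Function.Injective μ) (hx0 : ∀ j, x j ≠ 0) :
    LinearIndependent K x :=
  Module.End.eigenvectors_linearIndependent' (mulVecLin A) μ hμ x fun j =>
    ⟨Module.End.mem_eigenspace_iff.mpr (by rw [mulVecLin_apply, hx]), hx0 j⟩

theorem mem_span_range_comp_of_linearIndependent {K m n : Type*} [Field K] [Fintype n]
    {f : m → n} {u : n → n → K} (hu : LinearIndependent K fun j => u j ∘ f) (a : n → K) :
    a ∘ f ∈ Submodule.span K (Set.range fun j => u j ∘ f) := by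
  have htop : Submodule.span K (Set.range u) = ⊤ :=
    (hu.of_comp (LinearMap.funLeft K K f)).span_eq_top_of_card_eq_finrank' (by simp)
  rw [show (fun j => u j ∘ f) = LinearMap.funLeft K K f ∘ u from rfl, Set.range_comp,
    ← Submodule.map_span, htop]
  exact ⟨a, trivial, rfl⟩

namespace SimpleGraph

variable {V : Type*} {G : SimpleGraph V} {r v : V} {i : ℕ}

theorem IsTree.existsUnique_adj_dist_eq (hG : G.IsTree) (hv : G.dist r v = i + 1) :
    ∃! w, G.Adj v w ∧ G.dist r w = i := by
  classical
  obtain ⟨p, hp, hpl⟩ := hG.connected.exists_path_of_dist r v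
  have hnil : ¬p.Nil := by rw [← Walk.length_eq_zero_iff]; omega
  have hadj := p.adj_penultimate hnil
  refine ⟨p.penultimate, ⟨hadj.symm, ?_⟩, ?_⟩
  · have hle : G.dist r p.penultimate ≤ i :=
      (dist_le p.dropLast).trans (by rw [Walk.length_dropLast]; omega)
    have := hG.dist_eq_dist_add_one_of_adj r hadj
    omega
  · rintro w ⟨hvw, hw⟩
    obtain ⟨q, hq, hql⟩ := hG.connected.exists_path_of_dist r w
    have hvq : v ∉ q.support := fun hmem => by
      have := (dist_le (q.takeUntil v hmem)).trans (q.length_takeUntil_le_length hmem)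
      omega
    exact hG.isAcyclic.eq_penultimate_of_adj_end hp hvw
      (hG.isAcyclic.mem_support_of_ne_mem_support_of_adj_of_isPath hp hq hvw hvq)

variable [Fintype V]

theorem sum_comp_dist_eq_sum_range {M : Type*} [AddCommMonoid M] {n : ℕ}
    (h : ∀ v, G.dist r v < n) (F : ℕ → M) :
    ∑ v, F (G.dist r v) = ∑ i ∈ range n, #{v | G.dist r v = i} • F i := by
  rw [← sum_fiberwise_of_maps_to (g := G.dist r) (t := range n) fun v _ => mem_range.mpr (h v)]
  refine sum_congr rfl fun i _ => ?_
  rw [sum_congr rfl fun v hv => by rw [(mem_filter.mp hv).2], sum_const]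

variable [DecidableRel G.Adj]

noncomputable def childFinset (G : SimpleGraph V) [DecidableRel G.Adj] (r v : V) : Finset V :=
  {w ∈ G.neighborFinset v | G.dist r w = G.dist r v + 1}

theorem IsTree.card_filter_dist_add_one_eq (hG : G.IsTree) (r v : V) :
    #{w ∈ G.neighborFinset v | G.dist r w + 1 = G.dist r v} = if G.dist r v = 0 then 0 else 1 := by
  split_ifs with h
  · exact card_eq_zero.mpr (filter_eq_empty_iff.mpr fun w _ hw => by omega)
  · obtain ⟨i, hi⟩ := Nat.exists_eq_succ_of_ne_zero h
    obtain ⟨w, hw, huniq⟩ := hG.existsUnique_adj_dist_eq hi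
    refine card_eq_one.mpr ⟨w, eq_singleton_iff_unique_mem.mpr ⟨?_, fun w' hw' => ?_⟩⟩
    · simp only [mem_filter, mem_neighborFinset]
      exact ⟨hw.1, by omega⟩
    · simp only [mem_filter, mem_neighborFinset] at hw'
      exact huniq w' ⟨hw'.1, by omega⟩

theorem IsTree.sum_neighborFinset_comp_dist {M : Type*} [AddCommMonoid M] (hG : G.IsTree)
    (r v : V) (F : ℕ → M) :
    ∑ w ∈ G.neighborFinset v, F (G.dist r w) =
      #(G.childFinset r v) • F (G.dist r v + 1) +
        if G.dist r v = 0 then 0 else F (G.dist r v - 1) := by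
  have hparent : {w ∈ G.neighborFinset v | ¬G.dist r w = G.dist r v + 1} =
      {w ∈ G.neighborFinset v | G.dist r w + 1 = G.dist r v} :=
    filter_congr fun w hw => by
      have := hG.dist_eq_dist_add_one_of_adj r ((mem_neighborFinset _ _ _).mp hw)
      omega
  rw [← sum_filter_add_sum_filter_not _ fun w => G.dist r w = G.dist r v + 1, hparent,
    sum_eq_card_nsmul fun w hw => congrArg F (mem_filter.mp hw).2,
    sum_eq_card_nsmul (b := F (G.dist r v - 1)) fun w hw => by rw [← (mem_filter.mp hw).2]; rfl,
    hG.card_filter_dist_add_one_eq]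
  congr 1
  split_ifs <;> simp

theorem IsTree.degree_eq_card_childFinset_add (hG : G.IsTree) (r v : V) :
    G.degree v = #(G.childFinset r v) + if G.dist r v = 0 then 0 else 1 := by
  rw [← card_neighborFinset_eq_degree, card_eq_sum_ones,
    hG.sum_neighborFinset_comp_dist r v fun _ => 1, smul_eq_mul, mul_one]

theorem IsTree.card_filter_dist_succ (hG : G.IsTree) (r : V) {c : ℕ}
    (hc : ∀ v, G.dist r v = i → #(G.childFinset r v) = c) :
    #{v | G.dist r v = i + 1} = #{v | G.dist r v = i} * c := by
  symm
  simpa using card_mul_eq_card_mul G.Adj (s := {v | G.dist r v = i})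
    (t := {v | G.dist r v = i + 1}) (n := 1)
    (fun v hv => by
      rw [← hc v (mem_filter.mp hv).2, childFinset, (mem_filter.mp hv).2]
      congr 1; ext w; simp [and_comm])
    (fun w hw => by
      have hw' := (mem_filter.mp hw).2
      have := hG.card_filter_dist_add_one_eq r w
      rw [hw', if_neg (Nat.succ_ne_zero i)] at this
      rw [← this]
      congr 1; ext u; simp [adj_comm, and_comm])

end SimpleGraph

theorem adjMat_eq_adjMatrix {V : Type*} [Fintype V] (G : SimpleGraph V) [DecidableRel G.Adj] :
    adjMat G = G.adjMatrix ℝ := by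
  ext v w
  simp [adjMat, SimpleGraph.adjMatrix_apply]

section BetheTree

open SimpleGraph

variable {V : Type*} [Fintype V] {G : SimpleGraph V} [DecidableRel G.Adj] {r : V} {k d : ℕ}

omit [Fintype V] [DecidableRel G.Adj] in
theorem IsGenBetheTree.dist_lt {D : ℕ → ℕ} (hT : IsGenBetheTree G r k D) (hk : 0 < k) (v : V) :
    G.dist r v < k := by
  have := hT.2.2.2.2 v
  omega

variable (hT : IsGenBetheTree G r k (fun i => if i = 1 then d else d + 1))
include hT

theorem IsGenBetheTree.card_childFinset (v : V) :
    #(G.childFinset r v) = if G.dist r v + 1 < k then d else 0 := by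
  split_ifs with hv
  · have hdeg := hT.2.2.1 (G.dist r v + 1) (by omega) (by omega) v (by omega)
    rw [← coe_neighborFinset, Set.ncard_coe_finset, card_neighborFinset_eq_degree,
      hT.1.degree_eq_card_childFinset_add r] at hdeg
    dsimp only at hdeg
    split_ifs at hdeg <;> omega
  · refine card_eq_zero.mpr (filter_eq_empty_iff.mpr fun w _ hw => ?_)
    have := hT.2.2.2.2 w
    omega

theorem IsGenBetheTree.card_filter_dist_eq_pow {i : ℕ} (hi : i < k) :
    #{v | G.dist r v = i} = d ^ i := by
  induction i with
  | zero =>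
    rw [pow_zero, card_eq_one]
    exact ⟨r, by ext v; simp [hT.1.connected.dist_eq_zero_iff, eq_comm]⟩
  | succ i ih =>
    rw [hT.1.card_filter_dist_succ r fun v hv => by rw [hT.card_childFinset, if_pos (by omega)],
      ih (by omega), pow_succ]

theorem IsGenBetheTree.adjMatrix_mulVec_dampedSin (hk : 0 < k) (hd : d ≠ 0) {θ : ℝ}
    (hθ : sin ((k + 1) * θ) = 0) :
    G.adjMatrix ℝ *ᵥ (fun v => dampedSin √d θ (G.dist r v + 1)) =
      (2 * √d * cos θ) • fun v => dampedSin √d θ (G.dist r v + 1) := by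
  have hs : √d ^ 2 = d := sq_sqrt (Nat.cast_nonneg d)
  funext v
  rw [adjMatrix_mulVec_apply,
    hT.1.sum_neighborFinset_comp_dist r v fun i => dampedSin √d θ (i + 1), hT.card_childFinset,
    Pi.smul_apply, smul_eq_mul]
  have hchild : (if G.dist r v + 1 < k then d else 0) • dampedSin √d θ (G.dist r v + 1 + 1) =
      √d ^ 2 * dampedSin √d θ (G.dist r v + 2) := by
    split_ifs with h
    · rw [nsmul_eq_mul, hs]
    · have hleaf : G.dist r v + 2 = k + 1 := by have := hT.dist_lt hk v; omega
      rw [hleaf, dampedSin]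
      push_cast
      rw [hθ]
      simp
  have hparent : (if G.dist r v = 0 then 0 else dampedSin √d θ (G.dist r v - 1 + 1)) =
      dampedSin √d θ (G.dist r v) := by
    split_ifs with h
    · rw [h, dampedSin_zero]
    · rw [Nat.sub_add_cancel (Nat.pos_of_ne_zero h)]
  rw [hchild, hparent, add_comm]
  exact dampedSin_add_two (by positivity) θ _

theorem IsGenBetheTree.sum_dampedSin_ne_zero (hk : 0 < k) (hd : 2 ≤ d) {θ : ℝ}
    (hθ : sin θ ≠ 0) (hkθ : sin ((k + 1) * θ) = 0) :
    ∑ v, dampedSin √d θ (G.dist r v + 1) ≠ 0 := by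
  have hs : √d ^ 2 = d := sq_sqrt (Nat.cast_nonneg d)
  have hs0 : 0 < √d := by positivity
  have hs1 : √d ≠ 1 := fun h => by
    rw [h, one_pow] at hs
    norm_cast at hs
    omega
  have hterm : ∀ i ∈ range k, #{v | G.dist r v = i} • dampedSin √d θ (i + 1) =
      (√d)⁻¹ * (√d ^ i * sin ((i + 1) * θ)) := fun i hi => by
    rw [hT.card_filter_dist_eq_pow (mem_range.mp hi), nsmul_eq_mul, dampedSin]
    push_cast
    rw [show (d : ℝ) ^ i = √d ^ (2 * i) by rw [pow_mul, hs], inv_pow, pow_mul']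
    field_simp
    ring
  rw [sum_comp_dist_eq_sum_range (hT.dist_lt hk) fun i => dampedSin √d θ (i + 1),
    sum_congr rfl hterm, ← mul_sum]
  exact mul_ne_zero (inv_ne_zero hs0.ne') (sum_range_pow_mul_sin_ne_zero hs0.le hs1 hθ hkθ)

end BetheTree

/-- For `k ≥ 3` and `d ≥ 2`, the Bethe tree `B_{d,k}` (the generalized
Bethe tree with `k` levels, `d₁ = d` and `d₂ = ⋯ = d_{k-1} = d + 1`) has exactly `k`
main eigenvalues. -/
theorem betheTree_main_eigenvalues {V : Type*} [Fintype V] (G : SimpleGraph V) (r : V)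
    (k d : ℕ) (hk : 3 ≤ k) (hd : 2 ≤ d)
    (hT : IsGenBetheTree G r k (fun i => if i = 1 then d else d + 1)) :
    (mainSpectrum G).Finite ∧ (mainSpectrum G).ncard = k := by
  classical
  have hk0 : 0 < k := by omega
  let θ : Fin k → ℝ := fun j => π * (j.val + 1 : ℕ) / (k + 1 : ℕ)
  have hθ : ∀ j, θ j ∈ Set.Ioo 0 π := fun j => pi_mul_div_mem_Ioo j.val.succ_pos (by omega)
  have hkθ : ∀ j, sin ((k + 1) * θ j) = 0 := fun j => by
    rw [show ((k : ℝ) + 1) * θ j = (j.val + 1 : ℕ) * π by simp only [θ]; push_cast; field_simp]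
    exact sin_nat_mul_pi _
  let μ : Fin k → ℝ := fun j => 2 * √d * cos (θ j)
  have hμ : Function.Injective μ :=
    (mul_right_injective₀ (by positivity)).comp (injective_cos_pi_mul_div k)
  let level : V → Fin k := fun v => ⟨G.dist r v, hT.dist_lt hk0 v⟩
  let x : Fin k → V → ℝ := fun j => (fun i : Fin k => dampedSin √d (θ j) (i.val + 1)) ∘ level
  have hx : ∀ j, G.adjMatrix ℝ *ᵥ x j = μ j • x j := fun j =>
    hT.adjMatrix_mulVec_dampedSin hk0 (by omega) (hkθ j)
  have hsum : ∀ j, ∑ v, x j v ≠ 0 := fun j =>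
    hT.sum_dampedSin_ne_zero hk0 hd (sin_pos_of_pos_of_lt_pi (hθ j).1 (hθ j).2).ne' (hkθ j)
  have hx0 : ∀ j, x j ≠ 0 := fun j h => hsum j (by rw [show x j = 0 from h]; simp)
  have hone : (1 : V → ℝ) ∈ Submodule.span ℝ (Set.range x) :=
    mem_span_range_comp_of_linearIndependent (linearIndependent_of_mulVec_eq_smul hx hμ hx0) 1
  have hmain : mainSpectrum G = Set.range μ := by
    rw [mainSpectrum, adjMat_eq_adjMatrix]
    exact G.isSymm_adjMatrix.setOf_mulVec_eq_smul_sum_ne_zero_eq_range hx hsum hone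
  rw [hmain, Set.ncard_range_of_injective hμ, Nat.card_eq_fintype_card, Fintype.card_fin]
  exact ⟨Set.finite_range μ, rfl⟩
end
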